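/- arXiv:1105.3346 — 3 statements merged into one kernel-verified Lean document; each statement's English description precedes it below -/
import Mathlib

section
/- The sum over t from m to min(km,n) of C(n,t) · Q(k,m,t) equals (C(n,m))^k, where Q(k,m,t) = Σ_{i=0}^{t-m} (-1)^i C(t,i) (C(t-i,m))^k. -/
/-!
Write `g x = C(x, m) ^ k`. The inner alternating sum is the `t`-th forward difference `Δᵗ g 0`,
truncated at `i = t - m` because `g` vanishes below `m`. Newton's forward-difference formula gives
`g n = ∑ₜ C(n, t) Δᵗ g 0`, and the terms with `t < m` or `t > k m` vanish: the former because `g`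
vanishes below `m`, the latter because `g` is a polynomial of degree `k m`.
-/

open Finset Polynomial Function fwdDiff

-- `Δ_[1] ^[n]` needs the space: `]^` is a token of the exterior-power notation `⋀[R]^n`.

section ForwardDifference

variable {R : Type*} [Ring R]

lemma fwdDiff_iter_apply_zero_eq_sum (f : ℕ → R) (n : ℕ) :
    Δ_[1] ^[n] f 0 = ∑ i ∈ range (n + 1), (-1 : R) ^ i * n.choose i * f (n - i) := by
  rw [fwdDiff_iter_eq_sum_shift, ← sum_range_reflect]
  refine sum_congr rfl fun i hi ↦ ?_
  have hi : i ≤ n := Nat.lt_succ_iff.mp (mem_range.mp hi)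
  rw [zsmul_eq_mul, show n + 1 - 1 - i = n - i by omega, Nat.sub_sub_self hi,
    Nat.choose_symm hi]
  simp

lemma fwdDiff_iter_apply_zero_eq_sum_of_eq_zero {f : ℕ → R} {m : ℕ} (hf : ∀ j < m, f j = 0)
    (n : ℕ) :
    Δ_[1] ^[n] f 0 = ∑ i ∈ range (n - m + 1), (-1 : R) ^ i * n.choose i * f (n - i) := by
  rw [fwdDiff_iter_apply_zero_eq_sum]
  refine (sum_subset (range_subset_range.mpr (by omega)) fun i hi hi' ↦ ?_).symm
  rw [mem_range] at hi hi'
  rw [hf _ (by omega), mul_zero]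

lemma sum_choose_mul_fwdDiff_iter_apply_zero (f : ℕ → R) (n : ℕ) :
    ∑ t ∈ range (n + 1), (n.choose t : R) * Δ_[1] ^[t] f 0 = f n := by
  simpa [nsmul_eq_mul] using (shift_eq_sum_fwdDiff_iter 1 f n 0).symm

end ForwardDifference

lemma Polynomial.fwdDiff_iter_eq_zero_of_eval_natCast {R : Type*} [CommRing R] [CharZero R]
    {P : R[X]} {n : ℕ} (hP : P.natDegree < n) {f : ℕ → ℤ} (hf : ∀ x : ℕ, P.eval (x : R) = f x) :
    Δ_[1] ^[n] f = 0 := by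
  funext x
  have h := congrFun (fwdDiff_iter_eq_zero_of_degree_lt hP) (x : R)
  simp only [fwdDiff_iter_eq_sum_shift, nsmul_one, ← Nat.cast_add, hf, zsmul_eq_mul,
    Pi.zero_apply] at h ⊢
  exact_mod_cast h

lemma fwdDiff_iter_choose_pow_eq_zero {k m n : ℕ} (h : k * m < n) :
    Δ_[1] ^[n] (fun x : ℕ ↦ (x.choose m : ℤ) ^ k) = 0 := by
  set P : ℚ[X] := (C ((m.factorial : ℚ)⁻¹) * descPochhammer ℚ m) ^ k
  refine fwdDiff_iter_eq_zero_of_eval_natCast (P := P) (lt_of_le_of_lt ?_ h) fun x ↦ ?_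
  · exact natDegree_pow_le_of_le k
      ((natDegree_C_mul_le _ _).trans (descPochhammer_natDegree ℚ m).le)
  · simp [P, descPochhammer_eval_eq_descFactorial, Nat.descFactorial_eq_factorial_mul_choose,
      Nat.factorial_ne_zero]

theorem stmt3_general (n k m : ℕ) (hk : 1 ≤ k) :
    (∑ t ∈ Finset.Icc m (min (k * m) n),
        (n.choose t : ℤ) *
          ∑ i ∈ Finset.range (t - m + 1),
            (-1 : ℤ) ^ i * (t.choose i) * ((t - i).choose m) ^ k) =
      ((n.choose m : ℤ)) ^ k := by
  set g : ℕ → ℤ := fun x ↦ (x.choose m : ℤ) ^ k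
  have hg : ∀ j < m, g j = 0 := fun j hj ↦ by
    simp [g, Nat.choose_eq_zero_of_lt hj, zero_pow (by omega : k ≠ 0)]
  calc _ = ∑ t ∈ Icc m (min (k * m) n), (n.choose t : ℤ) * Δ_[1] ^[t] g 0 := by
        simp_rw [fwdDiff_iter_apply_zero_eq_sum_of_eq_zero hg, g]
    _ = ∑ t ∈ range (n + 1), (n.choose t : ℤ) * Δ_[1] ^[t] g 0 := by
        refine sum_subset (fun t ht ↦ by simp only [mem_Icc, mem_range] at ht ⊢; omega)
          fun t ht ht' ↦ ?_
        simp only [mem_Icc, mem_range] at ht ht'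
        rcases lt_or_ge t m with htm | htm
        · simp [fwdDiff_iter_apply_zero_eq_sum_of_eq_zero hg, Nat.sub_eq_zero_of_le htm.le,
            hg t htm]
        · simp [fwdDiff_iter_choose_pow_eq_zero (by omega : k * m < t), g]
    _ = _ := sum_choose_mul_fwdDiff_iter_apply_zero g n

/-- Σ_{t=m}^{min(km,n)} C(n,t) · Q(k,m,t) = (C(n,m))^k. -/
theorem stmt3 (n k m : ℕ) (hn : 1 ≤ n) (hk : 1 ≤ k) (hm : 1 ≤ m) (hmn : m ≤ n) :
    (∑ t ∈ Finset.Icc m (min (k * m) n),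
        (n.choose t : ℤ) *
          ∑ i ∈ Finset.range (t - m + 1),
            (-1 : ℤ) ^ i * (t.choose i) * ((t - i).choose m) ^ k) =
      ((n.choose m : ℤ)) ^ k :=
  stmt3_general n k m hk
end

section
/- For m ≤ t and k ≥ 1, Q(k,m,t) = Σ_{i=0}^{t-m} (-1)^i C(t,i) (C(t-i,m))^k is nonnegative, and Q(k,m,t) > 0 if and only if t ≤ km. -/
/-!
The alternating sum is the inclusion–exclusion count of the `k`-tuples of `m`-subsets of a
`t`-set that cover it: the tuples avoiding a fixed `i`-set number `C(t - i, m) ^ k`. So it is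
nonnegative, and positive iff such a covering exists. A covering forces `t ≤ k * m` by the union
bound; conversely, if `m ≤ t ≤ k * m`, blocks of `m` consecutive points cover `Fin t`.
-/

open Finset

def coveringTuples (ι α : Type*) [Fintype ι] [DecidableEq ι] [Fintype α] [DecidableEq α]
    (m : ℕ) : Finset (ι → Finset α) :=
  {f ∈ Fintype.piFinset fun _ ↦ powersetCard m univ | ∀ x, ∃ j, x ∈ f j}

section Counting

variable {ι α : Type*} [Fintype ι] [DecidableEq ι] [Fintype α] [DecidableEq α]

lemma card_piFinset_powersetCard_disjoint (m : ℕ) (I : Finset α) :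
    #{f ∈ Fintype.piFinset (fun _ : ι ↦ powersetCard m (univ : Finset α)) |
        ∀ j, Disjoint (f j) I} =
      (Fintype.card α - #I).choose m ^ Fintype.card ι := by
  have : {f ∈ Fintype.piFinset (fun _ : ι ↦ powersetCard m (univ : Finset α)) |
        ∀ j, Disjoint (f j) I} = Fintype.piFinset fun _ ↦ powersetCard m Iᶜ := by
    ext f
    simp only [mem_filter, Fintype.mem_piFinset, mem_powersetCard, subset_univ, true_and,
      subset_compl_iff_disjoint_right]
    exact ⟨fun h j ↦ ⟨h.2 j, h.1 j⟩, fun h ↦ ⟨fun j ↦ (h j).2, fun j ↦ (h j).1⟩⟩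
  rw [this, Fintype.card_piFinset, prod_const, card_powersetCard, card_compl, card_univ]

theorem card_coveringTuples_eq_sum (m : ℕ) :
    (#(coveringTuples ι α m) : ℤ) = ∑ i ∈ range (Fintype.card α + 1),
      (-1 : ℤ) ^ i * (Fintype.card α).choose i *
        ((Fintype.card α - i).choose m) ^ Fintype.card ι := by
  set U := Fintype.piFinset fun _ : ι ↦ powersetCard m (univ : Finset α)
  have h := inclusion_exclusion_sum_inf_compl (G := ℤ) univ
    (fun x : α ↦ ({f : ι → Finset α | ∀ j, x ∉ f j} : Finset _))
    (fun f ↦ if f ∈ U then 1 else 0)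
  have hcover : {f ∈ univ.inf fun x ↦ ({f : ι → Finset α | ∀ j, x ∉ f j} : Finset _)ᶜ |
      f ∈ U} = coveringTuples ι α m := by
    ext f
    simp [coveringTuples, U, mem_inf, and_comm]
  have havoid (I : Finset α) :
      {f ∈ I.inf fun x ↦ ({f : ι → Finset α | ∀ j, x ∉ f j} : Finset _) | f ∈ U} =
        {f ∈ U | ∀ j, Disjoint (f j) I} := by
    ext f
    simp only [mem_filter, mem_inf, mem_univ, true_and, disjoint_right]
    exact ⟨fun h ↦ ⟨h.2, fun j x hx ↦ h.1 x hx j⟩, fun h ↦ ⟨fun x hx j ↦ h.2 j hx, h.1⟩⟩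
  simp only [sum_boole, hcover, havoid, U, card_piFinset_powersetCard_disjoint] at h
  rw [h, sum_powerset_apply_card
    (fun i ↦ (-1 : ℤ) ^ i • (((Fintype.card α - i).choose m ^ Fintype.card ι : ℕ) : ℤ)),
    card_univ]
  refine sum_congr rfl fun i _ ↦ ?_
  push_cast
  rw [nsmul_eq_mul, smul_eq_mul, ← mul_assoc, mul_comm (_ : ℤ) ((-1) ^ i)]

lemma card_le_card_mul_of_mem_coveringTuples {m : ℕ} {f : ι → Finset α}
    (hf : f ∈ coveringTuples ι α m) : Fintype.card α ≤ Fintype.card ι * m := by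
  simp only [coveringTuples, mem_filter, Fintype.mem_piFinset, mem_powersetCard] at hf
  calc Fintype.card α = #(univ.biUnion f) := by
        rw [eq_univ_of_forall fun x ↦ mem_biUnion.2 ((hf.2 x).imp fun j hj ↦ ⟨mem_univ j, hj⟩),
          card_univ]
    _ ≤ ∑ j, #(f j) := card_biUnion_le
    _ = Fintype.card ι * m := by simp [fun j ↦ (hf.1 j).2]

end Counting

/-- The `j`-th block starts at `min (j * m) (t - m)`, so the blocks that would stick out of
`Fin t` are shifted back inside it. -/
lemma coveringTuples_fin_nonempty {k m t : ℕ} (hmt : m ≤ t) (htkm : t ≤ k * m) :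
    (coveringTuples (Fin k) (Fin t) m).Nonempty := by
  have hstart (j : Fin k) : min (j * m) (t - m) + m ≤ t := by omega
  refine ⟨fun j ↦ univ.map
    ((Fin.natAddEmb (min (j * m) (t - m))).trans (Fin.castLEEmb (hstart j))), ?_⟩
  simp only [coveringTuples, mem_filter, Fintype.mem_piFinset, mem_powersetCard, subset_univ,
    true_and, card_map, card_univ, Fintype.card_fin, implies_true]
  intro x
  have hm : 0 < m := Nat.pos_of_ne_zero fun h ↦ by
    have := x.isLt
    simp only [h, mul_zero] at htkm
    omega
  have hxk : x / m < k := (Nat.div_lt_iff_lt_mul hm).2 (x.isLt.trans_le htkm)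
  have hlo : x / m * m ≤ x := Nat.div_mul_le_self x m
  have hhi : x < x / m * m + m := Nat.lt_div_mul_add hm
  refine ⟨⟨x / m, hxk⟩, mem_map.2 ⟨⟨x - min (x / m * m) (t - m), by omega⟩, mem_univ _,
    Fin.ext ?_⟩⟩
  simp only [Function.Embedding.trans_apply, Fin.natAddEmb_apply, Fin.castLEEmb_apply,
    Fin.val_castLE, Fin.val_natAdd]
  omega

lemma card_coveringTuples_fin {k : ℕ} (hk : k ≠ 0) (m t : ℕ) :
    (#(coveringTuples (Fin k) (Fin t) m) : ℤ) = ∑ i ∈ range (t - m + 1),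
      (-1 : ℤ) ^ i * (t.choose i) * ((t - i).choose m) ^ k := by
  rw [card_coveringTuples_eq_sum, Fintype.card_fin, Fintype.card_fin]
  refine (sum_subset (range_subset_range.2 (by omega)) fun i hi hi' ↦ ?_).symm
  rw [mem_range] at hi hi'
  rw [Nat.choose_eq_zero_of_lt (by omega : t - i < m), Nat.cast_zero, zero_pow hk, mul_zero]

/-- For m ≤ t and k ≥ 1, Q(k,m,t) is nonnegative, and Q(k,m,t) > 0 iff t ≤ km. -/
theorem stmt15 (k m t : ℕ) (hk : 1 ≤ k) (hmt : m ≤ t) :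
    0 ≤ (∑ i ∈ Finset.range (t - m + 1),
          (-1 : ℤ) ^ i * (t.choose i) * ((t - i).choose m) ^ k) ∧
    (0 < (∑ i ∈ Finset.range (t - m + 1),
          (-1 : ℤ) ^ i * (t.choose i) * ((t - i).choose m) ^ k) ↔ t ≤ k * m) := by
  rw [← card_coveringTuples_fin (by omega)]
  refine ⟨Int.natCast_nonneg _, ?_⟩
  rw [Nat.cast_pos, card_pos]
  refine ⟨fun ⟨f, hf⟩ ↦ ?_, coveringTuples_fin_nonempty hmt⟩
  simpa using card_le_card_mul_of_mem_coveringTuples hf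
end

section
/- Σ_{t=m}^{min(km,n)} t · C(n,t) · Q(k,m,t) / (C(n,m))^k = n·(1 - ((n-m)/n)^k), where Q(k,m,t) = Σ_{i=0}^{t-m} (-1)^i C(t,i)(C(t-i,m))^k. -/
/-!
The inner sum `Q(k,m,t)` is the `t`-th forward difference at `0` of `f(x) = C(x,m)^k`, a
polynomial of degree `km`, so it vanishes for `t > km`; it also vanishes for `t < m`, so the sum
may run over all `0 ≤ t ≤ n`. Since `t C(n,t) = n C(n-1,t-1)`, the Gregory–Newton formula for
`Δf` at `n - 1` gives `∑ₜ t C(n,t) Δᵗf(0) = n Δf(n-1) = n (C(n,m)^k - C(n-1,m)^k)`, and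
`C(n-1,m) / C(n,m) = (n-m)/n`.
-/

open Finset Polynomial fwdDiff Nat

theorem sum_mul_choose_smul_fwdDiff_iter {M G : Type*} [AddCommMonoid M] [AddCommGroup G]
    (h : M) (f : M → G) (n : ℕ) (y : M) :
    ∑ t ∈ range (n + 2), (t * (n + 1).choose t) • Δ_[h] ^[t] f y =
      (n + 1) • Δ_[h] f (y + n • h) := by
  rw [sum_range_succ', shift_eq_sum_fwdDiff_iter h (Δ_[h] f), smul_sum]
  simp only [zero_mul, zero_smul, add_zero]
  refine sum_congr rfl fun t _ => ?_
  rw [Function.iterate_succ_apply, ← smul_assoc, smul_eq_mul, add_one_mul_choose_eq, mul_comm]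

section choosePow

variable (K : Type*) [Field K]

noncomputable def choosePow (m k : ℕ) (x : K) : K := ((descPochhammer K m).eval x / m !) ^ k

variable {K} {m k : ℕ}

theorem choosePow_natCast [CharZero K] (s : ℕ) : choosePow K m k s = (s.choose m : K) ^ k := by
  rw [choosePow, ← cast_choose_eq_descPochhammer_div]

theorem choosePow_eq_eval :
    choosePow K m k = ((C (m ! : K)⁻¹ * descPochhammer K m) ^ k).eval := by
  ext x
  simp only [choosePow, eval_pow, eval_mul, eval_C, div_eq_inv_mul]

theorem fwdDiff_iter_choosePow_eq_zero {t : ℕ} (ht : k * m < t) :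
    Δ_[1] ^[t] (choosePow K m k) = 0 := by
  rw [choosePow_eq_eval]
  refine fwdDiff_iter_eq_zero_of_degree_lt (natDegree_pow_le.trans_lt ?_)
  calc k * (C (m ! : K)⁻¹ * descPochhammer K m).natDegree
      ≤ k * (descPochhammer K m).natDegree := Nat.mul_le_mul_left k (natDegree_C_mul_le _ _)
    _ = k * m := by rw [descPochhammer_natDegree]
    _ < t := ht

theorem fwdDiff_iter_choosePow_zero [CharZero K] (hk : k ≠ 0) (t : ℕ) :
    Δ_[1] ^[t] (choosePow K m k) 0 =
      ∑ i ∈ range (t - m + 1), (-1 : K) ^ i * (t.choose i) * ((t - i).choose m) ^ k := by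
  rw [fwdDiff_iter_eq_sum_shift, ← sum_range_reflect]
  symm
  refine sum_subset (range_subset_range.2 (by omega)) ?_ |>.trans (sum_congr rfl fun i hi => ?_)
  · intro i hi hi'
    rw [mem_range] at hi hi'
    rw [choose_eq_zero_of_lt (show t - i < m by omega), cast_zero, zero_pow hk, mul_zero]
  · have hit : i ≤ t := by rw [mem_range] at hi; omega
    rw [show t + 1 - 1 - i = t - i by omega, Nat.sub_sub_self hit, choose_symm hit, zsmul_eq_mul,
      nsmul_eq_mul, mul_one, zero_add, choosePow_natCast]
    push_cast
    rfl

theorem fwdDiff_iter_choosePow_zero_of_lt [CharZero K] (hk : k ≠ 0) {t : ℕ} (ht : t < m) :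
    Δ_[1] ^[t] (choosePow K m k) 0 = 0 := by
  simp [fwdDiff_iter_choosePow_zero hk, Nat.sub_eq_zero_of_le ht.le, choose_eq_zero_of_lt ht, hk]

theorem sum_Icc_mul_fwdDiff_iter_choosePow [CharZero K] (hk : k ≠ 0) (n : ℕ) (g : ℕ → K) :
    ∑ t ∈ Icc m (min (k * m) n), g t * Δ_[1] ^[t] (choosePow K m k) 0 =
      ∑ t ∈ range (n + 1), g t * Δ_[1] ^[t] (choosePow K m k) 0 := by
  refine sum_subset (fun t ht => by simp only [mem_Icc, mem_range] at ht ⊢; omega)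
    fun t htn ht => ?_
  rcases lt_or_ge t m with htm | hmt
  · rw [fwdDiff_iter_choosePow_zero_of_lt hk htm, mul_zero]
  · simp only [mem_Icc, mem_range] at htn ht
    rw [fwdDiff_iter_choosePow_eq_zero (by omega), Pi.zero_apply, mul_zero]

end choosePow

theorem stmt17_general (n k m : ℕ) (hn : 1 ≤ n) (hmn : m ≤ n) (hk : 1 ≤ k) :
    (∑ t ∈ Finset.Icc m (min (k * m) n),
        (t : ℚ) * (n.choose t : ℚ) *
          (∑ i ∈ Finset.range (t - m + 1),
            (-1 : ℚ) ^ i * (t.choose i) * ((t - i).choose m) ^ k) /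
          (n.choose m : ℚ) ^ k) =
      (n : ℚ) * (1 - (((n - m : ℕ) : ℚ) / (n : ℚ)) ^ k) := by
  obtain ⟨n, rfl⟩ : ∃ n', n = n' + 1 := ⟨n - 1, by omega⟩
  have hk0 : k ≠ 0 := by omega
  have hC : ((n + 1).choose m : ℚ) ≠ 0 := cast_ne_zero.2 (choose_pos hmn).ne'
  have hnewton := sum_mul_choose_smul_fwdDiff_iter (1 : ℚ) (choosePow ℚ m k) n 0
  simp only [nsmul_eq_mul, cast_mul, zero_add, mul_one, fwdDiff, ← cast_succ,
    choosePow_natCast] at hnewton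
  have hratio : ((n + 1 - m : ℕ) : ℚ) / (n + 1 : ℕ) = n.choose m / (n + 1).choose m := by
    rw [div_eq_div_iff (by positivity) hC]
    exact_mod_cast (mul_comm _ _).trans (choose_mul_succ_eq n m).symm
  calc _ = (∑ t ∈ range (n + 2), t * (n + 1).choose t * Δ_[1] ^[t] (choosePow ℚ m k) 0 : ℚ)
          / ((n + 1).choose m) ^ k := by
        simp only [← sum_div, ← fwdDiff_iter_choosePow_zero hk0,
          sum_Icc_mul_fwdDiff_iter_choosePow hk0]
    _ = (n + 1 : ℕ) * (((n + 1).choose m) ^ k - (n.choose m) ^ k) / ((n + 1).choose m) ^ k := by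
        rw [hnewton]
    _ = _ := by
        rw [hratio, div_pow, mul_div_assoc, sub_div, div_self (pow_ne_zero k hC)]

/-- Σ_{t=m}^{min(km,n)} t·C(n,t)·Q(k,m,t)/(C(n,m))^k = n·(1 - ((n-m)/n)^k). -/
theorem stmt17 (n k m : ℕ) (hn : 1 ≤ n) (hm : 1 ≤ m) (hmn : m ≤ n) (hk : 1 ≤ k) :
    (∑ t ∈ Finset.Icc m (min (k * m) n),
        (t : ℚ) * (n.choose t : ℚ) *
          (∑ i ∈ Finset.range (t - m + 1),
            (-1 : ℚ) ^ i * (t.choose i) * ((t - i).choose m) ^ k) /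
          (n.choose m : ℚ) ^ k) =
      (n : ℚ) * (1 - (((n - m : ℕ) : ℚ) / (n : ℚ)) ^ k) :=
  stmt17_general n k m hn hmn hk
end
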